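/- arXiv:1609.03704 — 2 statements merged into one kernel-verified Lean document; each statement's English description precedes it below -/
import Mathlib

section
/- The curvature function of an elastica is bounded, with an explicit bound from the two first integrals: if h1, h2, h3 : ℝ → ℝ are differentiable and satisfy h1' = h3·h2, h2' = -h3, h3' = -h1·h2 on ℝ, then for every s ∈ ℝ one has h2(s)² ≤ 2·(h1(0) + h2(0)²/2) + 2·√(h1(0)² + h3(0)²); in particular |h2| is bounded on ℝ. -/
/-!
The energy `h1 + h2²/2` and the Casimir `h1² + h3²` are first integrals of the system.
Conservation of energy expresses `h2(s)²` as `2 E - 2 h1(s)` with `E` the energy at `0`,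
and conservation of the Casimir gives `h1(s)² ≤ h1(0)² + h3(0)²`, so `-h1(s) ≤ √(h1(0)² + h3(0)²)`.
-/

theorem eq_of_forall_hasDerivAt_zero {𝕜 G : Type*} [RCLike 𝕜] [NormedAddCommGroup G]
    [NormedSpace 𝕜 G] {f : 𝕜 → G} (hf : ∀ x, HasDerivAt f 0 x) (x y : 𝕜) : f x = f y :=
  is_const_of_deriv_eq_zero (fun z => (hf z).differentiableAt) (fun z => (hf z).deriv) x y

namespace Elastica

variable {h1 h2 h3 : ℝ → ℝ}

theorem hasDerivAt_energy (hd1 : ∀ s, HasDerivAt h1 (h3 s * h2 s) s)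
    (hd2 : ∀ s, HasDerivAt h2 (-h3 s) s) (x : ℝ) :
    HasDerivAt (fun t => h1 t + h2 t ^ 2 / 2) 0 x :=
  ((hd1 x).add (((hd2 x).pow 2).div_const 2)).congr_deriv (by ring)

theorem energy_eq (hd1 : ∀ s, HasDerivAt h1 (h3 s * h2 s) s)
    (hd2 : ∀ s, HasDerivAt h2 (-h3 s) s) (s : ℝ) :
    h1 s + h2 s ^ 2 / 2 = h1 0 + h2 0 ^ 2 / 2 :=
  eq_of_forall_hasDerivAt_zero (hasDerivAt_energy hd1 hd2) s 0

theorem hasDerivAt_casimir (hd1 : ∀ s, HasDerivAt h1 (h3 s * h2 s) s)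
    (hd3 : ∀ s, HasDerivAt h3 (-(h1 s * h2 s)) s) (x : ℝ) :
    HasDerivAt (fun t => h1 t ^ 2 + h3 t ^ 2) 0 x :=
  (((hd1 x).pow 2).add ((hd3 x).pow 2)).congr_deriv (by ring)

theorem casimir_eq (hd1 : ∀ s, HasDerivAt h1 (h3 s * h2 s) s)
    (hd3 : ∀ s, HasDerivAt h3 (-(h1 s * h2 s)) s) (s : ℝ) :
    h1 s ^ 2 + h3 s ^ 2 = h1 0 ^ 2 + h3 0 ^ 2 :=
  eq_of_forall_hasDerivAt_zero (hasDerivAt_casimir hd1 hd3) s 0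

end Elastica

/-- The curvature `h2` of an elastica is bounded, with an explicit bound
coming from the two first integrals `h1 + h2²/2` and `h1² + h3²` of the
vertical part of the elastica Hamiltonian system. -/
theorem elastica_curvature_bounded
    (h1 h2 h3 : ℝ → ℝ)
    (hd1 : ∀ s : ℝ, HasDerivAt h1 (h3 s * h2 s) s)
    (hd2 : ∀ s : ℝ, HasDerivAt h2 (-h3 s) s)
    (hd3 : ∀ s : ℝ, HasDerivAt h3 (-(h1 s * h2 s)) s) :
    ∀ s : ℝ, h2 s ^ 2 ≤ 2 * (h1 0 + h2 0 ^ 2 / 2) + 2 * Real.sqrt (h1 0 ^ 2 + h3 0 ^ 2) := by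
  intro s
  have h1_lower : -Real.sqrt (h1 0 ^ 2 + h3 0 ^ 2) ≤ h1 s :=
    Real.neg_sqrt_le_of_sq_le <| by
      rw [← Elastica.casimir_eq hd1 hd3 s]
      exact le_add_of_nonneg_right (sq_nonneg _)
  linarith [Elastica.energy_eq hd1 hd2 s]
end

section
/- An Euler elastica and the spatial projection of a sub-Riemannian geodesic on SE(2) coincide (after reparameterization of the geodesic projection by spatial arclength) on a nontrivial interval only if both are straight line segments. Precisely: let (x, y, θ, h1, h2, h3) : [a, b] → ℝ⁶ solve the elastica system h1' = h3·h2, h2' = -h3, h3' = -h1·h2, x' = cos θ, y' = sin θ, θ' = h2, and let (x̃, ỹ, θ̃, h̃1, h̃2, h̃3) : [α, β] → ℝ⁶ solve the geodesic system ḣ̃1 = h̃3·h̃2, ḣ̃2 = -h̃3·h̃1, ḣ̃3 = -h̃2·h̃1, ẋ̃ = h̃1·cos θ̃, ẏ̃ = h̃1·sin θ̃, θ̃̇ = h̃2 with h̃1(α)² + h̃2(α)² = 1 and ẋ̃(t)² + ẏ̃(t)² ≠ 0 for all t ∈ [α, β]. Set s(t) = ∫_α^t √(ẋ̃² + ẏ̃²)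 dτ, S = s(β), and let t(s) be the inverse function of s(t). If (x(s), y(s)) = (x̃(t(s)), ỹ(t(s))) for all s in some open interval (c, d) ⊂ [a, b] ∩ [0, S] with c < d, then both plane curves Γ = {(x(s), y(s)) : s ∈ [a, b]} and Γ̃ = {(x̃(t), ỹ(t)) : t ∈ [α, β]} are segments of straight lines (equivalently, h2 ≡ 0 on [a, b] and h̃2 ≡ 0 on [α, β], so there exist points p, p̃ ∈ ℝ² and unit vectors v, ṽ ∈ ℝ² with (x(s), y(s)) = p + s·v and (x̃(t(s)), ỹ(t(s))) = p̃ + s·ṽ). -/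
/-!
Where the curves coincide, the spatial arclength `s` of the geodesic has derivative
`|g1| = σ g1` with `σ = ±1` (no cusps). Differentiating `x ∘ s = xt`, `y ∘ s = yt` and then
the resulting identities gives, on the overlap,
`cos θ(s) = σ cos θt`, `g1 h2(s) = σ g2`, `g1³ h3(s) = g3` and
`g2 (g1⁴ h1(s) - g1² - 3 g3²) = 0`.
Where `g2 ≠ 0`, one more derivative of the bracket forces `g3 = 0`, hence `g1 g2 = -g3' = 0`,
a contradiction; so `g2 = g3 = 0` on the overlap, and then also `h2(s) = h3(s) = 0` there.
Both `(h2, h3)` and `(g2, g3)` solve linear systems `u' = -v p`, `v' = -u q`, so by Grönwall they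
vanish identically once they vanish at one point. With zero curvature both curves are straight
lines, and `|g1| ≡ 1` makes `s(t) = t - α`.
-/

open Set Real

structure IsElasticaOn (S : Set ℝ) (x y θ h1 h2 h3 : ℝ → ℝ) : Prop where
  deriv_h1 : ∀ s ∈ S, HasDerivWithinAt h1 (h3 s * h2 s) S s
  deriv_h2 : ∀ s ∈ S, HasDerivWithinAt h2 (-h3 s) S s
  deriv_h3 : ∀ s ∈ S, HasDerivWithinAt h3 (-(h1 s * h2 s)) S s
  deriv_x : ∀ s ∈ S, HasDerivWithinAt x (cos (θ s)) S s
  deriv_y : ∀ s ∈ S, HasDerivWithinAt y (sin (θ s)) S s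
  deriv_θ : ∀ s ∈ S, HasDerivWithinAt θ (h2 s) S s

structure IsSRGeodesicOn (S : Set ℝ) (x y θ h1 h2 h3 : ℝ → ℝ) : Prop where
  deriv_h1 : ∀ t ∈ S, HasDerivWithinAt h1 (h3 t * h2 t) S t
  deriv_h2 : ∀ t ∈ S, HasDerivWithinAt h2 (-(h3 t * h1 t)) S t
  deriv_h3 : ∀ t ∈ S, HasDerivWithinAt h3 (-(h2 t * h1 t)) S t
  deriv_x : ∀ t ∈ S, HasDerivWithinAt x (h1 t * cos (θ t)) S t
  deriv_y : ∀ t ∈ S, HasDerivWithinAt y (h1 t * sin (θ t)) S t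
  deriv_θ : ∀ t ∈ S, HasDerivWithinAt θ (h2 t) S t

theorem IsSRGeodesicOn.mono {S T : Set ℝ} {x y θ h1 h2 h3 : ℝ → ℝ}
    (hG : IsSRGeodesicOn S x y θ h1 h2 h3) (hTS : T ⊆ S) : IsSRGeodesicOn T x y θ h1 h2 h3 where
  deriv_h1 t ht := (hG.deriv_h1 t (hTS ht)).mono hTS
  deriv_h2 t ht := (hG.deriv_h2 t (hTS ht)).mono hTS
  deriv_h3 t ht := (hG.deriv_h3 t (hTS ht)).mono hTS
  deriv_x t ht := (hG.deriv_x t (hTS ht)).mono hTS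
  deriv_y t ht := (hG.deriv_y t (hTS ht)).mono hTS
  deriv_θ t ht := (hG.deriv_θ t (hTS ht)).mono hTS

section Calculus

variable {a b : ℝ} {f f' : ℝ → ℝ}

theorem eq_of_hasDerivWithinAt_of_eqOn {U : Set ℝ} {g : ℝ → ℝ} {t c c' : ℝ}
    (hU : IsOpen U) (ht : t ∈ U) (hfg : ∀ u ∈ U, f u = g u) (hf : HasDerivWithinAt f c U t)
    (hg : HasDerivWithinAt g c' U t) : c = c' :=
  (hU.uniqueDiffWithinAt ht).eq_deriv U (hf.congr_of_mem (fun u hu => (hfg u hu).symm) ht) hg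

theorem eq_add_sub_mul_of_hasDerivWithinAt_Icc {c : ℝ}
    (hf : ∀ t ∈ Icc a b, HasDerivWithinAt f c (Icc a b) t) :
    ∀ t ∈ Icc a b, f t = f a + (t - a) * c := by
  refine eq_of_has_deriv_right_eq (f' := fun _ => c)
    (fun t ht => (hf t (Ico_subset_Icc_self ht)).mono_of_mem_nhdsWithin
      (Icc_mem_nhdsGE_of_mem ht))
    (fun t _ => ?_) (fun t ht => (hf t ht).continuousWithinAt) (by fun_prop) (by simp)
  simpa using ((((hasDerivAt_id t).sub_const a).mul_const c).const_add (f a)).hasDerivWithinAt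

theorem eq_zero_of_abs_deriv_le_mul_abs_of_eq_zero_left {K : ℝ}
    (hf : ∀ t ∈ Icc a b, HasDerivWithinAt f (f' t) (Icc a b) t)
    (bound : ∀ t ∈ Icc a b, |f' t| ≤ K * |f t|) (ha : f a = 0) :
    ∀ t ∈ Icc a b, f t = 0 :=
  eq_zero_of_abs_deriv_le_mul_abs_self_of_eq_zero_right
    (fun t ht => (hf t ht).continuousWithinAt)
    (fun t ht => (hf t (Ico_subset_Icc_self ht)).mono_of_mem_nhdsWithin
      (Icc_mem_nhdsGE_of_mem ht))
    ha (fun t ht => bound t (Ico_subset_Icc_self ht))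

theorem eq_zero_of_abs_deriv_le_mul_abs_of_eq_zero {K t₀ : ℝ}
    (hf : ∀ t ∈ Icc a b, HasDerivWithinAt f (f' t) (Icc a b) t)
    (bound : ∀ t ∈ Icc a b, |f' t| ≤ K * |f t|) (ht₀ : t₀ ∈ Icc a b)
    (h₀ : f t₀ = 0) :
    ∀ t ∈ Icc a b, f t = 0 := by
  intro t ht
  rcases le_total t₀ t with h | h
  · have hsub : Icc t₀ b ⊆ Icc a b := Icc_subset_Icc_left ht₀.1
    exact eq_zero_of_abs_deriv_le_mul_abs_of_eq_zero_left
      (fun u hu => (hf u (hsub hu)).mono hsub) (fun u hu => bound u (hsub hu)) h₀ t ⟨h, ht.2⟩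
  · have hneg : MapsTo Neg.neg (Icc (-t₀) (-a)) (Icc a t₀) := fun u hu =>
      ⟨le_neg.mp hu.2, neg_le.mp hu.1⟩
    have hsub : Icc a t₀ ⊆ Icc a b := Icc_subset_Icc_right ht₀.2
    have := eq_zero_of_abs_deriv_le_mul_abs_of_eq_zero_left (f := f ∘ Neg.neg)
      (f' := fun u => f' (-u) * -1) (K := K)
      (fun u hu => ((hf (-u) (hsub (hneg hu))).mono hsub).comp u
        (hasDerivAt_neg u).hasDerivWithinAt hneg)
      (fun u hu => by simpa using bound (-u) (hsub (hneg hu))) (by simpa using h₀)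
      (-t) ⟨neg_le_neg h, neg_le_neg ht.1⟩
    simpa using this

theorem eq_zero_of_cross_linear_ode {t₀ : ℝ} {u v p q : ℝ → ℝ}
    (hp : ContinuousOn p (Icc a b)) (hq : ContinuousOn q (Icc a b))
    (hu : ∀ t ∈ Icc a b, HasDerivWithinAt u (-(v t * p t)) (Icc a b) t)
    (hv : ∀ t ∈ Icc a b, HasDerivWithinAt v (-(u t * q t)) (Icc a b) t)
    (ht₀ : t₀ ∈ Icc a b) (hu₀ : u t₀ = 0) (hv₀ : v t₀ = 0) :
    ∀ t ∈ Icc a b, u t = 0 ∧ v t = 0 := by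
  obtain ⟨K, hK⟩ := isCompact_Icc.exists_bound_of_continuousOn (hp.add hq)
  -- `(u² + v²)' = -2uv(p + q)` and `|2uv| ≤ u² + v²`
  have hsq := eq_zero_of_abs_deriv_le_mul_abs_of_eq_zero (K := K)
    (f := fun t => u t ^ 2 + v t ^ 2)
    (f' := fun t => -(2 * u t * v t) * (p t + q t))
    (fun t ht => (((hu t ht).pow 2).add ((hv t ht).pow 2)).congr_deriv (by simp; ring))
    (fun t ht => by
      rw [abs_mul, abs_neg, abs_of_nonneg (by positivity : 0 ≤ u t ^ 2 + v t ^ 2), mul_comm K]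
      refine mul_le_mul (abs_le.mpr ⟨?_, ?_⟩) (by simpa using hK t ht) (abs_nonneg _)
        (by positivity) <;> nlinarith [sq_nonneg (u t + v t), sq_nonneg (u t - v t)])
    ht₀ (by simp [hu₀, hv₀])
  intro t ht
  obtain ⟨hu, hv⟩ := (add_eq_zero_iff_of_nonneg (sq_nonneg _) (sq_nonneg _)).mp (hsq t ht)
  exact ⟨pow_eq_zero_iff two_ne_zero |>.mp hu, pow_eq_zero_iff two_ne_zero |>.mp hv⟩

end Calculus

theorem exists_sq_eq_one_abs_eq_mul_of_ne_zero {S : Set ℝ} {g : ℝ → ℝ}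
    (hS : IsPreconnected S) (hg : ContinuousOn g S) (hg0 : ∀ t ∈ S, g t ≠ 0) :
    ∃ σ : ℝ, σ ^ 2 = 1 ∧ ∀ t ∈ S, |g t| = σ * g t := by
  rcases hS.eq_or_eq_neg_of_sq_eq hg.abs hg (fun t _ => by simp) (hg0 _ ·) with h | h
  · exact ⟨1, one_pow 2, fun t ht => by simpa using h ht⟩
  · exact ⟨-1, by norm_num, fun t ht => by simpa using h ht⟩

theorem continuousOn_primitive_Icc {a b : ℝ} {f : ℝ → ℝ} (hab : a ≤ b)
    (hf : ContinuousOn f (Icc a b)) : ContinuousOn (fun t => ∫ τ in a..t, f τ) (Icc a b) := by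
  simpa [uIcc_of_le hab] using
    intervalIntegral.continuousOn_primitive_interval (hf.integrableOn_Icc.mono_set
      (uIcc_of_le hab).subset)

theorem hasDerivAt_primitive_of_mem_Ioo {a b t : ℝ} {f : ℝ → ℝ}
    (hf : ContinuousOn f (Icc a b)) (ht : t ∈ Ioo a b) :
    HasDerivAt (fun u => ∫ τ in a..u, f τ) (f t) t :=
  intervalIntegral.integral_hasDerivAt_right
    ((hf.mono (Icc_subset_Icc_right ht.2.le)).intervalIntegrable_of_Icc ht.1.le)
    ((hf.mono Ioo_subset_Icc_self).stronglyMeasurableAtFilter isOpen_Ioo t ht)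
    (hf.continuousAt (Icc_mem_nhds ht.1 ht.2))

theorem sqrt_mul_cos_sq_add_mul_sin_sq (r φ : ℝ) :
    √((r * cos φ) ^ 2 + (r * sin φ) ^ 2) = |r| := by
  rw [← sqrt_sq_eq_abs]
  congr 1
  linear_combination r ^ 2 * sin_sq_add_cos_sq φ

section Straight

variable {a b : ℝ} {x y θ h1 h2 h3 : ℝ → ℝ}

theorem IsElasticaOn.eq_zero_of_eq_zero (hE : IsElasticaOn (Icc a b) x y θ h1 h2 h3) {s₀ : ℝ}
    (hs₀ : s₀ ∈ Icc a b) (h2₀ : h2 s₀ = 0) (h3₀ : h3 s₀ = 0) :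
    ∀ s ∈ Icc a b, h2 s = 0 ∧ h3 s = 0 :=
  eq_zero_of_cross_linear_ode (p := fun _ => 1) continuousOn_const
    (fun s hs => (hE.deriv_h1 s hs).continuousWithinAt)
    (fun s hs => (hE.deriv_h2 s hs).congr_deriv (by ring))
    (fun s hs => (hE.deriv_h3 s hs).congr_deriv (by ring)) hs₀ h2₀ h3₀

theorem IsElasticaOn.exists_line (hE : IsElasticaOn (Icc a b) x y θ h1 h2 h3)
    (h2_eq : ∀ s ∈ Icc a b, h2 s = 0) :
    ∃ p₁ p₂ v₁ v₂ : ℝ, v₁ ^ 2 + v₂ ^ 2 = 1 ∧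
      ∀ s ∈ Icc a b, x s = p₁ + s * v₁ ∧ y s = p₂ + s * v₂ := by
  have hθ := eq_add_sub_mul_of_hasDerivWithinAt_Icc fun s hs =>
    h2_eq s hs ▸ hE.deriv_θ s hs
  have hx := eq_add_sub_mul_of_hasDerivWithinAt_Icc (c := cos (θ a)) fun s hs => by
    simpa [hθ s hs] using hE.deriv_x s hs
  have hy := eq_add_sub_mul_of_hasDerivWithinAt_Icc (c := sin (θ a)) fun s hs => by
    simpa [hθ s hs] using hE.deriv_y s hs
  refine ⟨x a - a * cos (θ a), y a - a * sin (θ a), cos (θ a), sin (θ a),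
    cos_sq_add_sin_sq _, fun s hs => ⟨?_, ?_⟩⟩
  · rw [hx s hs]; ring
  · rw [hy s hs]; ring

variable {g1 g2 g3 : ℝ → ℝ}

theorem IsSRGeodesicOn.eq_zero_of_eq_zero (hG : IsSRGeodesicOn (Icc a b) x y θ g1 g2 g3)
    {t₀ : ℝ} (ht₀ : t₀ ∈ Icc a b) (g2₀ : g2 t₀ = 0) (g3₀ : g3 t₀ = 0) :
    ∀ t ∈ Icc a b, g2 t = 0 ∧ g3 t = 0 :=
  have hg1 : ContinuousOn g1 (Icc a b) := fun t ht => (hG.deriv_h1 t ht).continuousWithinAt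
  eq_zero_of_cross_linear_ode hg1 hg1 hG.deriv_h2 hG.deriv_h3 ht₀ g2₀ g3₀

theorem IsSRGeodesicOn.sq_add_sq_eq (hG : IsSRGeodesicOn (Icc a b) x y θ g1 g2 g3) :
    ∀ t ∈ Icc a b, g1 t ^ 2 + g2 t ^ 2 = g1 a ^ 2 + g2 a ^ 2 := by
  intro t ht
  simpa using eq_add_sub_mul_of_hasDerivWithinAt_Icc (c := 0)
    (f := fun t => g1 t ^ 2 + g2 t ^ 2)
    (fun t ht => (((hG.deriv_h1 t ht).pow 2).add ((hG.deriv_h2 t ht).pow 2)).congr_deriv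
      (by simp; ring)) t ht

theorem IsSRGeodesicOn.h1_eq_of_h2_eq_zero (hG : IsSRGeodesicOn (Icc a b) x y θ g1 g2 g3)
    (g2_eq : ∀ t ∈ Icc a b, g2 t = 0) : ∀ t ∈ Icc a b, g1 t = g1 a := by
  intro t ht
  simpa using eq_add_sub_mul_of_hasDerivWithinAt_Icc (c := 0)
    (fun t ht => by simpa [g2_eq t ht] using hG.deriv_h1 t ht) t ht

theorem IsSRGeodesicOn.abs_h1_eq_one (hG : IsSRGeodesicOn (Icc a b) x y θ g1 g2 g3)
    (hab : a ≤ b) (hunit : g1 a ^ 2 + g2 a ^ 2 = 1) (g2_eq : ∀ t ∈ Icc a b, g2 t = 0) :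
    ∀ t ∈ Icc a b, |g1 t| = 1 := by
  intro t ht
  have ha : g1 a ^ 2 = 1 := by simpa [g2_eq a (left_mem_Icc.mpr hab)] using hunit
  rw [hG.h1_eq_of_h2_eq_zero g2_eq t ht, ← sqrt_sq_eq_abs, ha, sqrt_one]

theorem IsSRGeodesicOn.exists_line (hG : IsSRGeodesicOn (Icc a b) x y θ g1 g2 g3)
    (hab : a ≤ b) (hunit : g1 a ^ 2 + g2 a ^ 2 = 1) (g2_eq : ∀ t ∈ Icc a b, g2 t = 0) :
    ∃ q₁ q₂ w₁ w₂ : ℝ, w₁ ^ 2 + w₂ ^ 2 = 1 ∧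
      ∀ t ∈ Icc a b, x t = q₁ + (t - a) * w₁ ∧ y t = q₂ + (t - a) * w₂ := by
  have hg1 := hG.h1_eq_of_h2_eq_zero g2_eq
  have hθ := eq_add_sub_mul_of_hasDerivWithinAt_Icc fun t ht =>
    g2_eq t ht ▸ hG.deriv_θ t ht
  have hx := eq_add_sub_mul_of_hasDerivWithinAt_Icc (c := g1 a * cos (θ a)) fun t ht => by
    simpa [hθ t ht, hg1 t ht] using hG.deriv_x t ht
  have hy := eq_add_sub_mul_of_hasDerivWithinAt_Icc (c := g1 a * sin (θ a)) fun t ht => by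
    simpa [hθ t ht, hg1 t ht] using hG.deriv_y t ht
  refine ⟨x a, y a, g1 a * cos (θ a), g1 a * sin (θ a), ?_,
    fun t ht => ⟨hx t ht, hy t ht⟩⟩
  have ha : g1 a ^ 2 = 1 := by simpa [g2_eq a (left_mem_Icc.mpr hab)] using hunit
  linear_combination ha + g1 a ^ 2 * sin_sq_add_cos_sq (θ a)

end Straight

section Coincidence

variable {U V : Set ℝ} {σ : ℝ} {s x y θ h1 h2 h3 xt yt θt g1 g2 g3 : ℝ → ℝ}

theorem tangent_comp_eq (hU : IsOpen U) (hE : IsElasticaOn V x y θ h1 h2 h3)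
    (hG : IsSRGeodesicOn U xt yt θt g1 g2 g3) (hs : ∀ t ∈ U, HasDerivAt s (σ * g1 t) t)
    (hsUV : MapsTo s U V) (hσ : σ ^ 2 = 1) (hg1 : ∀ t ∈ U, g1 t ≠ 0)
    (hx : ∀ t ∈ U, x (s t) = xt t) (hy : ∀ t ∈ U, y (s t) = yt t) :
    ∀ t ∈ U, cos (θ (s t)) = σ * cos (θt t) ∧ sin (θ (s t)) = σ * sin (θt t) := by
  have key {X Xt c ct : ℝ → ℝ} (hX : ∀ u ∈ V, HasDerivWithinAt X (c u) V u)
      (hXt : ∀ t ∈ U, HasDerivWithinAt Xt (g1 t * ct t) U t)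
      (hXXt : ∀ t ∈ U, X (s t) = Xt t)
      (t : ℝ) (ht : t ∈ U) : c (s t) = σ * ct t := by
    have h := eq_of_hasDerivWithinAt_of_eqOn hU ht hXXt
      ((hX _ (hsUV ht)).comp t (hs t ht).hasDerivWithinAt hsUV) (hXt t ht)
    apply mul_right_cancel₀ (hg1 t ht)
    linear_combination σ * h - c (s t) * g1 t * hσ
  exact fun t ht => ⟨key hE.deriv_x hG.deriv_x hx t ht, key hE.deriv_y hG.deriv_y hy t ht⟩

theorem curvature_comp_eq (hU : IsOpen U) (hE : IsElasticaOn V x y θ h1 h2 h3)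
    (hG : IsSRGeodesicOn U xt yt θt g1 g2 g3) (hs : ∀ t ∈ U, HasDerivAt s (σ * g1 t) t)
    (hsUV : MapsTo s U V) (hσ : σ ^ 2 = 1)
    (htan : ∀ t ∈ U, cos (θ (s t)) = σ * cos (θt t) ∧ sin (θ (s t)) = σ * sin (θt t)) :
    ∀ t ∈ U, g1 t * h2 (s t) = σ * g2 t := by
  intro t ht
  have hθs := (hE.deriv_θ _ (hsUV ht)).comp t (hs t ht).hasDerivWithinAt hsUV
  have hcos := eq_of_hasDerivWithinAt_of_eqOn hU ht (fun u hu => (htan u hu).1) hθs.cos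
    ((hG.deriv_θ t ht).cos.const_mul σ)
  have hsin := eq_of_hasDerivWithinAt_of_eqOn hU ht (fun u hu => (htan u hu).2) hθs.sin
    ((hG.deriv_θ t ht).sin.const_mul σ)
  obtain ⟨hcos_eq, hsin_eq⟩ := htan t ht
  simp only [Function.comp_apply, hcos_eq, hsin_eq] at hcos hsin
  linear_combination (-sin (θt t)) * hcos + cos (θt t) * hsin
    - (σ ^ 2 * h2 (s t) * g1 t - σ * g2 t) * sin_sq_add_cos_sq (θt t) - h2 (s t) * g1 t * hσ

theorem h3_comp_eq (hU : IsOpen U) (hE : IsElasticaOn V x y θ h1 h2 h3)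
    (hG : IsSRGeodesicOn U xt yt θt g1 g2 g3) (hs : ∀ t ∈ U, HasDerivAt s (σ * g1 t) t)
    (hsUV : MapsTo s U V) (hσ : σ ^ 2 = 1) (hunit : ∀ t ∈ U, g1 t ^ 2 + g2 t ^ 2 = 1)
    (hcurv : ∀ t ∈ U, g1 t * h2 (s t) = σ * g2 t) :
    ∀ t ∈ U, g1 t ^ 3 * h3 (s t) = g3 t := by
  intro t ht
  have h := eq_of_hasDerivWithinAt_of_eqOn hU ht hcurv
    ((hG.deriv_h1 t ht).mul ((hE.deriv_h2 _ (hsUV ht)).comp t (hs t ht).hasDerivWithinAt hsUV))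
    ((hG.deriv_h2 t ht).const_mul σ)
  linear_combination (-(σ * g1 t)) * h + σ * g3 t * g2 t * hcurv t ht
    - (g1 t ^ 3 * h3 (s t) - g3 t * g1 t ^ 2 - g3 t * g2 t ^ 2) * hσ + g3 t * hunit t ht

theorem sr_curvature_mul_h1_comp_eq_zero (hU : IsOpen U) (hE : IsElasticaOn V x y θ h1 h2 h3)
    (hG : IsSRGeodesicOn U xt yt θt g1 g2 g3) (hs : ∀ t ∈ U, HasDerivAt s (σ * g1 t) t)
    (hsUV : MapsTo s U V) (hσ : σ ^ 2 = 1) (hcurv : ∀ t ∈ U, g1 t * h2 (s t) = σ * g2 t)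
    (hh3 : ∀ t ∈ U, g1 t ^ 3 * h3 (s t) = g3 t) :
    ∀ t ∈ U, g2 t * (g1 t ^ 4 * h1 (s t) - g1 t ^ 2 - 3 * g3 t ^ 2) = 0 := by
  intro t ht
  have h := eq_of_hasDerivWithinAt_of_eqOn hU ht hh3
    (((hG.deriv_h1 t ht).pow 3).mul
      ((hE.deriv_h3 _ (hsUV ht)).comp t (hs t ht).hasDerivWithinAt hsUV))
    (hG.deriv_h3 t ht)
  push_cast [Pi.pow_apply] at h
  linear_combination (-g1 t) * h + 3 * g3 t * g2 t * hh3 t ht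
    - σ * g1 t ^ 4 * h1 (s t) * hcurv t ht - g1 t ^ 4 * h1 (s t) * g2 t * hσ

theorem sr_h3_eq_zero_of_sr_curvature_ne_zero (hU : IsOpen U)
    (hE : IsElasticaOn V x y θ h1 h2 h3) (hG : IsSRGeodesicOn U xt yt θt g1 g2 g3)
    (hs : ∀ t ∈ U, HasDerivAt s (σ * g1 t) t)
    (hsUV : MapsTo s U V) (hσ : σ ^ 2 = 1) (hg1 : ∀ t ∈ U, g1 t ≠ 0)
    (hg2 : ∀ t ∈ U, g2 t ≠ 0) (hcurv : ∀ t ∈ U, g1 t * h2 (s t) = σ * g2 t)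
    (hh3 : ∀ t ∈ U, g1 t ^ 3 * h3 (s t) = g3 t)
    (hh1 : ∀ t ∈ U, g1 t ^ 4 * h1 (s t) = g1 t ^ 2 + 3 * g3 t ^ 2) :
    ∀ t ∈ U, g3 t = 0 := by
  intro t ht
  have h := eq_of_hasDerivWithinAt_of_eqOn hU ht hh1
    (((hG.deriv_h1 t ht).pow 4).mul
      ((hE.deriv_h1 _ (hsUV ht)).comp t (hs t ht).hasDerivWithinAt hsUV))
    (((hG.deriv_h1 t ht).pow 2).add (((hG.deriv_h3 t ht).pow 2).const_mul 3))
  push_cast [Pi.pow_apply] at h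
  have hprod : g1 t * g2 t * g3 t * (5 + 4 * g1 t ^ 2 * h1 (s t)) = 0 := by
    linear_combination h - σ * g1 t ^ 2 * h2 (s t) * hh3 t ht
      - σ * g1 t * g3 t * hcurv t ht - g1 t * g2 t * g3 t * hσ
  by_contra hg3
  have h5 : 5 + 4 * g1 t ^ 2 * h1 (s t) = 0 := by
    simpa [hg1 t ht, hg2 t ht, hg3] using hprod
  have : 9 * g1 t ^ 2 + 12 * g3 t ^ 2 = 0 := by linear_combination g1 t ^ 2 * h5 - 4 * hh1 t ht
  nlinarith [sq_pos_of_ne_zero (hg1 t ht), sq_nonneg (g3 t)]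


theorem curvatures_eq_zero_of_coincide (hU : IsOpen U) (hE : IsElasticaOn V x y θ h1 h2 h3)
    (hG : IsSRGeodesicOn U xt yt θt g1 g2 g3) (hs : ∀ t ∈ U, HasDerivAt s (σ * g1 t) t)
    (hsUV : MapsTo s U V) (hσ : σ ^ 2 = 1) (hg1 : ∀ t ∈ U, g1 t ≠ 0)
    (hunit : ∀ t ∈ U, g1 t ^ 2 + g2 t ^ 2 = 1)
    (hx : ∀ t ∈ U, x (s t) = xt t) (hy : ∀ t ∈ U, y (s t) = yt t) :
    ∀ t ∈ U, g2 t = 0 ∧ g3 t = 0 ∧ h2 (s t) = 0 ∧ h3 (s t) = 0 := by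
  have hcurv := curvature_comp_eq hU hE hG hs hsUV hσ
    (tangent_comp_eq hU hE hG hs hsUV hσ hg1 hx hy)
  have hh3 := h3_comp_eq hU hE hG hs hsUV hσ hunit hcurv
  have hprod := sr_curvature_mul_h1_comp_eq_zero hU hE hG hs hsUV hσ hcurv hh3
  have hg2 : ∀ t ∈ U, g2 t = 0 := by
    intro t₀ ht₀
    by_contra hne
    -- on the open set `W` where `g2 ≠ 0`, `g3` vanishes, hence so does `g3' = -g2 g1`
    set W := U ∩ g2 ⁻¹' {0}ᶜ
    have hW : IsOpen W := ContinuousOn.isOpen_inter_preimage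
      (fun t ht => (hG.deriv_h2 t ht).continuousWithinAt) hU isOpen_compl_singleton
    have hWU : W ⊆ U := inter_subset_left
    have hg3 := sr_h3_eq_zero_of_sr_curvature_ne_zero hW hE (hG.mono hWU)
      (fun t ht => hs t ht.1) (hsUV.mono_left hWU) hσ (fun t ht => hg1 t ht.1) (fun t ht => ht.2)
      (fun t ht => hcurv t ht.1) (fun t ht => hh3 t ht.1) fun t ht => by
        linear_combination (mul_eq_zero.mp (hprod t ht.1)).resolve_left ht.2
    have h := eq_of_hasDerivWithinAt_of_eqOn hW ⟨ht₀, hne⟩ hg3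
      ((hG.mono hWU).deriv_h3 t₀ ⟨ht₀, hne⟩) (hasDerivWithinAt_const t₀ W 0)
    exact mul_ne_zero hne (hg1 t₀ ht₀) (neg_eq_zero.mp h)
  have hg3 : ∀ t ∈ U, g3 t = 0 := fun t ht => by
    have h := eq_of_hasDerivWithinAt_of_eqOn hU ht hg2 (hG.deriv_h2 t ht)
      (hasDerivWithinAt_const t U 0)
    exact (mul_eq_zero.mp (neg_eq_zero.mp h)).resolve_right (hg1 t ht)
  intro t ht
  refine ⟨hg2 t ht, hg3 t ht, ?_, ?_⟩
  · have h := hcurv t ht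
    rw [hg2 t ht, mul_zero] at h
    exact (mul_eq_zero.mp h).resolve_left (hg1 t ht)
  · have h := hh3 t ht
    rw [hg3 t ht] at h
    exact (mul_eq_zero.mp h).resolve_left (pow_ne_zero 3 (hg1 t ht))

end Coincidence

theorem exists_flat_point_of_coincide {a b α β c d : ℝ}
    {s x y θ h1 h2 h3 xt yt θt g1 g2 g3 : ℝ → ℝ}
    (hE : IsElasticaOn (Icc a b) x y θ h1 h2 h3)
    (hG : IsSRGeodesicOn (Icc α β) xt yt θt g1 g2 g3) (hαβ : α ≤ β)
    (hunit : g1 α ^ 2 + g2 α ^ 2 = 1) (hg1 : ∀ t ∈ Icc α β, g1 t ≠ 0)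
    (hs_cont : ContinuousOn s (Icc α β)) (hs_deriv : ∀ t ∈ Ioo α β, HasDerivAt s |g1 t| t)
    (hsα : s α = 0) (hcd : c < d) (hsub : Ioo c d ⊆ Icc a b ∩ Icc 0 (s β))
    (hcoin : ∀ t ∈ Icc α β, s t ∈ Ioo c d → x (s t) = xt t ∧ y (s t) = yt t) :
    ∃ t₀ ∈ Icc α β, s t₀ ∈ Icc a b ∧
      g2 t₀ = 0 ∧ g3 t₀ = 0 ∧ h2 (s t₀) = 0 ∧ h3 (s t₀) = 0 := by
  obtain ⟨σ, hσ, habs⟩ := exists_sq_eq_one_abs_eq_mul_of_ne_zero isPreconnected_Icc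
    (fun t ht => (hG.deriv_h1 t ht).continuousWithinAt) hg1
  have hm : (c + d) / 2 ∈ Ioo c d := ⟨by linarith, by linarith⟩
  have hsub' : Ioo c d ⊆ Ioo 0 (s β) := by
    simpa using interior_maximal (hsub.trans inter_subset_right) isOpen_Ioo
  obtain ⟨t₀, ht₀, hst₀⟩ : (c + d) / 2 ∈ s '' Icc α β :=
    intermediate_value_Icc hαβ hs_cont (hsα ▸ Ioo_subset_Icc_self (hsub' hm))
  have hst₀' : s t₀ ∈ Ioo c d := hst₀ ▸ hm
  set U := Ioo α β ∩ s ⁻¹' Ioo c d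
  have hU : IsOpen U :=
    (hs_cont.mono Ioo_subset_Icc_self).isOpen_inter_preimage isOpen_Ioo isOpen_Ioo
  have hUI : U ⊆ Icc α β := fun t ht => Ioo_subset_Icc_self ht.1
  have ht₀U : t₀ ∈ U := by
    refine ⟨⟨ht₀.1.lt_of_ne ?_, ht₀.2.lt_of_ne ?_⟩, hst₀'⟩ <;> rintro rfl
    · linarith [(hsub' hm).1]
    · linarith [(hsub' hm).2]
  refine ⟨t₀, ht₀, (hsub hst₀').1, curvatures_eq_zero_of_coincide hU hE (hG.mono hUI)
    (fun t ht => habs t (hUI ht) ▸ hs_deriv t ht.1) (fun t ht => (hsub ht.2).1) hσ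
    (fun t ht => hg1 t (hUI ht)) (fun t ht => hunit ▸ hG.sq_add_sq_eq t (hUI ht))
    (fun t ht => (hcoin t (hUI ht) ht.2).1) (fun t ht => (hcoin t (hUI ht) ht.2).2) t₀ ht₀U⟩

theorem elastica_eq_srGeodesic_iff_straight_line_general
    (a b α β : ℝ) (hαβ : α < β)
    -- the elastica: solution of the elastica Hamiltonian system on [a, b]
    (x y θ h1 h2 h3 : ℝ → ℝ)
    (e1 : ∀ s ∈ Set.Icc a b, HasDerivWithinAt h1 (h3 s * h2 s) (Set.Icc a b) s)
    (e2 : ∀ s ∈ Set.Icc a b, HasDerivWithinAt h2 (-h3 s) (Set.Icc a b) s)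
    (e3 : ∀ s ∈ Set.Icc a b, HasDerivWithinAt h3 (-(h1 s * h2 s)) (Set.Icc a b) s)
    (ex : ∀ s ∈ Set.Icc a b, HasDerivWithinAt x (Real.cos (θ s)) (Set.Icc a b) s)
    (ey : ∀ s ∈ Set.Icc a b, HasDerivWithinAt y (Real.sin (θ s)) (Set.Icc a b) s)
    (eθ : ∀ s ∈ Set.Icc a b, HasDerivWithinAt θ (h2 s) (Set.Icc a b) s)
    -- the geodesic: solution of the SR geodesic Hamiltonian system on [α, β]
    (xt yt θt g1 g2 g3 : ℝ → ℝ)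
    (f1 : ∀ t ∈ Set.Icc α β, HasDerivWithinAt g1 (g3 t * g2 t) (Set.Icc α β) t)
    (f2 : ∀ t ∈ Set.Icc α β, HasDerivWithinAt g2 (-(g3 t * g1 t)) (Set.Icc α β) t)
    (f3 : ∀ t ∈ Set.Icc α β, HasDerivWithinAt g3 (-(g2 t * g1 t)) (Set.Icc α β) t)
    (fx : ∀ t ∈ Set.Icc α β,
      HasDerivWithinAt xt (g1 t * Real.cos (θt t)) (Set.Icc α β) t)
    (fy : ∀ t ∈ Set.Icc α β,
      HasDerivWithinAt yt (g1 t * Real.sin (θt t)) (Set.Icc α β) t)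
    (fθ : ∀ t ∈ Set.Icc α β, HasDerivWithinAt θt (g2 t) (Set.Icc α β) t)
    -- unit covector: SR-arclength parameterization
    (hunit : g1 α ^ 2 + g2 α ^ 2 = 1)
    -- no cusp points: ẋ̃² + ẏ̃² ≠ 0 on [α, β]
    (hnocusp : ∀ t ∈ Set.Icc α β,
      (g1 t * Real.cos (θt t)) ^ 2 + (g1 t * Real.sin (θt t)) ^ 2 ≠ 0)
    -- the spatial arclength function s(t) = ∫_α^t √(ẋ̃² + ẏ̃²) dτ
    (sfun : ℝ → ℝ)
    (hsfun : ∀ t, sfun t =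
      ∫ τ in α..t,
        Real.sqrt ((g1 τ * Real.cos (θt τ)) ^ 2 + (g1 τ * Real.sin (θt τ)) ^ 2))
    -- tfun is the inverse function t(s) of s(t)
    (tfun : ℝ → ℝ)
    (htfun₁ : ∀ t ∈ Set.Icc α β, tfun (sfun t) = t)
    -- the two spatial projections coincide on a nontrivial interval (c, d)
    (c d : ℝ) (hcd : c < d)
    (hsub : Set.Ioo c d ⊆ Set.Icc a b ∩ Set.Icc 0 (sfun β))
    (hcoin : ∀ s ∈ Set.Ioo c d, x s = xt (tfun s) ∧ y s = yt (tfun s)) :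
    -- conclusion: both curves are straight line segments
    (∀ s ∈ Set.Icc a b, h2 s = 0) ∧ (∀ t ∈ Set.Icc α β, g2 t = 0) ∧
    ∃ p₁ p₂ q₁ q₂ v₁ v₂ w₁ w₂ : ℝ,
      v₁ ^ 2 + v₂ ^ 2 = 1 ∧ w₁ ^ 2 + w₂ ^ 2 = 1 ∧
      (∀ s ∈ Set.Icc a b, x s = p₁ + s * v₁ ∧ y s = p₂ + s * v₂) ∧
      (∀ s ∈ Set.Icc 0 (sfun β),
        xt (tfun s) = q₁ + s * w₁ ∧ yt (tfun s) = q₂ + s * w₂) := by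
  have hE : IsElasticaOn (Icc a b) x y θ h1 h2 h3 := ⟨e1, e2, e3, ex, ey, eθ⟩
  have hG : IsSRGeodesicOn (Icc α β) xt yt θt g1 g2 g3 := ⟨f1, f2, f3, fx, fy, fθ⟩
  have hg1 : ∀ t ∈ Icc α β, g1 t ≠ 0 := fun t ht h0 => hnocusp t ht (by simp [h0])
  have hg1c : ContinuousOn (fun t => |g1 t|) (Icc α β) := fun t ht =>
    (hG.deriv_h1 t ht).continuousWithinAt.abs
  simp only [sqrt_mul_cos_sq_add_mul_sin_sq] at hsfun
  have hs_cont : ContinuousOn sfun (Icc α β) :=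
    funext hsfun ▸ continuousOn_primitive_Icc hαβ.le hg1c
  have hsα : sfun α = 0 := by simp [hsfun]
  obtain ⟨t₀, ht₀, hs₀, hg2₀, hg3₀, hh2₀, hh3₀⟩ :=
    exists_flat_point_of_coincide hE hG hαβ.le hunit hg1 hs_cont
      (fun t ht => funext hsfun ▸ hasDerivAt_primitive_of_mem_Ioo hg1c ht)
      hsα hcd hsub fun t ht hst => by simpa only [htfun₁ t ht] using hcoin _ hst
  have hE_flat := hE.eq_zero_of_eq_zero hs₀ hh2₀ hh3₀
  have hG_flat := hG.eq_zero_of_eq_zero ht₀ hg2₀ hg3₀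
  obtain ⟨p₁, p₂, v₁, v₂, hv, hxy⟩ := hE.exists_line fun s hs => (hE_flat s hs).1
  have hg2 : ∀ t ∈ Icc α β, g2 t = 0 := fun t ht => (hG_flat t ht).1
  obtain ⟨q₁, q₂, w₁, w₂, hw, hxyt⟩ := hG.exists_line hαβ.le hunit hg2
  have habs := hG.abs_h1_eq_one hαβ.le hunit hg2
  have hs_lin : ∀ t ∈ Icc α β, sfun t = t - α := fun t ht => by
    rw [hsfun, intervalIntegral.integral_congr (g := fun _ => (1 : ℝ)) fun τ hτ =>
      habs τ (uIcc_subset_Icc (left_mem_Icc.mpr hαβ.le) ht hτ)]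
    simp
  refine ⟨fun s hs => (hE_flat s hs).1, hg2,
    p₁, p₂, q₁, q₂, v₁, v₂, w₁, w₂, hv, hw, hxy, fun s hs => ?_⟩
  obtain ⟨t, ht, rfl⟩ := intermediate_value_Icc hαβ.le hs_cont (by rwa [hsα])
  rw [htfun₁ t ht, hs_lin t ht]
  exact hxyt t ht

/-- Theorem 1 of the paper: if an Euler elastica and the spatial projection of
a cusp-free sub-Riemannian geodesic on SE(2) (the latter reparameterized by
spatial arclength via the inverse `tfun` of `sfun t = ∫_α^t √(ẋ̃² + ẏ̃²) dτ`)
coincide on a nontrivial interval (c, d), then both plane curves are straight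
line segments: the curvatures h2 and h̃2 vanish identically and both curves are
affine in their arclength parameters with unit direction vectors. -/
theorem elastica_eq_srGeodesic_iff_straight_line
    (a b α β : ℝ) (hab : a < b) (hαβ : α < β)
    -- the elastica: solution of the elastica Hamiltonian system on [a, b]
    (x y θ h1 h2 h3 : ℝ → ℝ)
    (e1 : ∀ s ∈ Set.Icc a b, HasDerivWithinAt h1 (h3 s * h2 s) (Set.Icc a b) s)
    (e2 : ∀ s ∈ Set.Icc a b, HasDerivWithinAt h2 (-h3 s) (Set.Icc a b) s)
    (e3 : ∀ s ∈ Set.Icc a b, HasDerivWithinAt h3 (-(h1 s * h2 s)) (Set.Icc a b) s)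
    (ex : ∀ s ∈ Set.Icc a b, HasDerivWithinAt x (Real.cos (θ s)) (Set.Icc a b) s)
    (ey : ∀ s ∈ Set.Icc a b, HasDerivWithinAt y (Real.sin (θ s)) (Set.Icc a b) s)
    (eθ : ∀ s ∈ Set.Icc a b, HasDerivWithinAt θ (h2 s) (Set.Icc a b) s)
    -- the geodesic: solution of the SR geodesic Hamiltonian system on [α, β]
    (xt yt θt g1 g2 g3 : ℝ → ℝ)
    (f1 : ∀ t ∈ Set.Icc α β, HasDerivWithinAt g1 (g3 t * g2 t) (Set.Icc α β) t)
    (f2 : ∀ t ∈ Set.Icc α β, HasDerivWithinAt g2 (-(g3 t * g1 t)) (Set.Icc α β) t)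
    (f3 : ∀ t ∈ Set.Icc α β, HasDerivWithinAt g3 (-(g2 t * g1 t)) (Set.Icc α β) t)
    (fx : ∀ t ∈ Set.Icc α β,
      HasDerivWithinAt xt (g1 t * Real.cos (θt t)) (Set.Icc α β) t)
    (fy : ∀ t ∈ Set.Icc α β,
      HasDerivWithinAt yt (g1 t * Real.sin (θt t)) (Set.Icc α β) t)
    (fθ : ∀ t ∈ Set.Icc α β, HasDerivWithinAt θt (g2 t) (Set.Icc α β) t)
    -- unit covector: SR-arclength parameterization
    (hunit : g1 α ^ 2 + g2 α ^ 2 = 1)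
    -- no cusp points: ẋ̃² + ẏ̃² ≠ 0 on [α, β]
    (hnocusp : ∀ t ∈ Set.Icc α β,
      (g1 t * Real.cos (θt t)) ^ 2 + (g1 t * Real.sin (θt t)) ^ 2 ≠ 0)
    -- the spatial arclength function s(t) = ∫_α^t √(ẋ̃² + ẏ̃²) dτ
    (sfun : ℝ → ℝ)
    (hsfun : ∀ t, sfun t =
      ∫ τ in α..t,
        Real.sqrt ((g1 τ * Real.cos (θt τ)) ^ 2 + (g1 τ * Real.sin (θt τ)) ^ 2))
    -- tfun is the inverse function t(s) of s(t)
    (tfun : ℝ → ℝ)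
    (htfun₁ : ∀ t ∈ Set.Icc α β, tfun (sfun t) = t)
    (htfun₂ : ∀ s ∈ Set.Icc 0 (sfun β), sfun (tfun s) = s)
    -- the two spatial projections coincide on a nontrivial interval (c, d)
    (c d : ℝ) (hcd : c < d)
    (hsub : Set.Ioo c d ⊆ Set.Icc a b ∩ Set.Icc 0 (sfun β))
    (hcoin : ∀ s ∈ Set.Ioo c d, x s = xt (tfun s) ∧ y s = yt (tfun s)) :
    -- conclusion: both curves are straight line segments
    (∀ s ∈ Set.Icc a b, h2 s = 0) ∧ (∀ t ∈ Set.Icc α β, g2 t = 0) ∧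
    ∃ p₁ p₂ q₁ q₂ v₁ v₂ w₁ w₂ : ℝ,
      v₁ ^ 2 + v₂ ^ 2 = 1 ∧ w₁ ^ 2 + w₂ ^ 2 = 1 ∧
      (∀ s ∈ Set.Icc a b, x s = p₁ + s * v₁ ∧ y s = p₂ + s * v₂) ∧
      (∀ s ∈ Set.Icc 0 (sfun β),
        xt (tfun s) = q₁ + s * w₁ ∧ yt (tfun s) = q₂ + s * w₂) :=
  elastica_eq_srGeodesic_iff_straight_line_general a b α β hαβ x y θ h1 h2 h3 e1 e2 e3 ex ey eθ xt
    yt θt g1 g2 g3 f1 f2 f3 fx fy fθ hunit hnocusp sfun hsfun tfun htfun₁ c d hcd hsub hcoin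
end
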